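/- There exists a constant C>0 such that for every λ ≥ 1, every s>0 and every regular solution v of the auxiliary degenerate problem with right-hand side h ∈ L²(Q), setting w = e^{sφ} v, one has −2s² ∬_Q φ_tx a φ_x w² ≥ −C s² λ² ( ∫₀ᵀ ∫₀^{α'} (x²/a) σ³ w² + ∬_{(0,T)×ω'} σ³ w² + ∬_Q a² |ψ'|⁴ σ³ w² ). -/

import Mathlib

open MeasureTheory Set Real Filter

noncomputable section

/-- The sup norm of `ψ` on `[0,1]`. -/
def psiSup (ψ : ℝ → ℝ) : ℝ := ⨆ x : Icc (0:ℝ) 1, |ψ x.1|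

/-- `Θ(t) = 1/(t(T-t))⁴`. -/
def thetaFun (T t : ℝ) : ℝ := 1 / (t * (T - t)) ^ 4

/-- `η(x) = exp (λ(‖ψ‖_∞ + ψ x))`. -/
def etaFun (ψ : ℝ → ℝ) (lam x : ℝ) : ℝ := exp (lam * (psiSup ψ + ψ x))

/-- `σ(t,x) = Θ(t) η(x)`. -/
def sigmaFun (T : ℝ) (ψ : ℝ → ℝ) (lam t x : ℝ) : ℝ := thetaFun T t * etaFun ψ lam x

/-- `φ(t,x) = Θ(t) (exp (λ(‖ψ‖_∞ + ψ x)) - exp (3λ‖ψ‖_∞))`. -/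
def phiFun (T : ℝ) (ψ : ℝ → ℝ) (lam t x : ℝ) : ℝ :=
  thetaFun T t * (etaFun ψ lam x - exp (3 * (lam * psiSup ψ)))

/-- Partial derivative in the space variable. -/
def pderivX (f : ℝ → ℝ → ℝ) (t x : ℝ) : ℝ := deriv (fun y => f t y) x

/-- Partial derivative in the time variable. -/
def pderivT (f : ℝ → ℝ → ℝ) (t x : ℝ) : ℝ := deriv (fun τ => f τ x) t

/-- `w = e^{sφ} v`. -/
def wFun (T : ℝ) (ψ : ℝ → ℝ) (lam s : ℝ) (v : ℝ → ℝ → ℝ) (t x : ℝ) : ℝ :=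
  exp (s * phiFun T ψ lam t x) * v t x

/-- The cylinder `(0,T) × (l,r)`. -/
def QSub (T l r : ℝ) : Set (ℝ × ℝ) := Ioo 0 T ×ˢ Ioo l r

/-- Structural hypotheses on the degenerate coefficient `a` (whose derivative on `(0,1]`
is the given function `a'`): `a ∈ C([0,1]) ∩ C¹((0,1])` is nondecreasing, `a(0) = 0` and
`a > 0` on `(0,1]`. -/
structure DegenCoeff (a a' : ℝ → ℝ) : Prop where
  cont : ContinuousOn a (Icc 0 1)
  hasDeriv : ∀ x ∈ Ioc (0:ℝ) 1, HasDerivAt a (a' x) x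
  contDeriv : ContinuousOn a' (Ioc 0 1)
  mono : MonotoneOn a (Icc 0 1)
  zero : a 0 = 0
  pos : ∀ x ∈ Ioc (0:ℝ) 1, 0 < a x

/-- Weak degeneracy: `x a'(x) ≤ K a(x)` on `(0,1]` with `K ∈ [0,1)`. -/
def DegenWeak (a a' : ℝ → ℝ) (K : ℝ) : Prop :=
  0 ≤ K ∧ K < 1 ∧ ∀ x ∈ Ioc (0:ℝ) 1, x * a' x ≤ K * a x

/-- Strong degeneracy: `x a'(x) ≤ K a(x)` on `(0,1]` with `K ∈ [1,2)`, together with the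
additional condition `θ a ≤ x a'` near zero, with `θ ∈ (1,K]` if `K > 1` and `θ ∈ (0,1)`
if `K = 1`. -/
def DegenStrong (a a' : ℝ → ℝ) (K : ℝ) : Prop :=
  1 ≤ K ∧ K < 2 ∧ (∀ x ∈ Ioc (0:ℝ) 1, x * a' x ≤ K * a x) ∧
    ∃ θ δ : ℝ, 0 < δ ∧ δ ≤ 1 ∧ (∀ x ∈ Ioc (0:ℝ) δ, θ * a x ≤ x * a' x) ∧
      (1 < K → 1 < θ ∧ θ ≤ K) ∧ (K = 1 → 0 < θ ∧ θ < 1)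

/-- The weight function `ψ ∈ C²([0,1])`, equal to `∫₀ˣ y/a(y) dy` on `[0, l)` and to
`-∫_r^x y/a(y) dy` on `[r, 1]`. -/
structure WeightPsi (a : ℝ → ℝ) (l r : ℝ) (ψ : ℝ → ℝ) : Prop where
  smooth : ContDiffOn ℝ 2 ψ (Icc 0 1)
  left : ∀ x ∈ Ico (0:ℝ) l, ψ x = ∫ y in (0:ℝ)..x, y / a y
  right : ∀ x ∈ Icc r 1, ψ x = -∫ y in r..x, y / a y

/-- A regular solution of `v_t + (a v_x)_x = rhs` in `Q = (0,T)×(0,1)` with `v(t,1) = 0`: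
`v, v_x` are continuous on `[0,T]×(0,1]`, `v_t, (a v_x)_x` are continuous on `(0,T)×(0,1]`. -/
structure RegSol (T : ℝ) (a : ℝ → ℝ) (rhs : ℝ → ℝ → ℝ) (v : ℝ → ℝ → ℝ) : Prop where
  contV : ContinuousOn (fun p : ℝ × ℝ => v p.1 p.2) (Icc 0 T ×ˢ Ioc 0 1)
  contVx : ContinuousOn (fun p : ℝ × ℝ => pderivX v p.1 p.2) (Icc 0 T ×ˢ Ioc 0 1)
  contVt : ContinuousOn (fun p : ℝ × ℝ => pderivT v p.1 p.2) (Ioo 0 T ×ˢ Ioc 0 1)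
  contAVxx : ContinuousOn
      (fun p : ℝ × ℝ => pderivX (fun t x => a x * pderivX v t x) p.1 p.2)
      (Ioo 0 T ×ˢ Ioc 0 1)
  eq : ∀ t ∈ Ioo 0 T, ∀ x ∈ Ioo (0:ℝ) 1,
      pderivT v t x + pderivX (fun t x => a x * pderivX v t x) t x = rhs t x
  bdryOne : ∀ t ∈ Ioo 0 T, v t 1 = 0

/-- Dirichlet boundary condition at `x = 0` (weak degeneracy case). -/
def BdryWeak (T : ℝ) (v : ℝ → ℝ → ℝ) : Prop := ∀ t ∈ Ioo 0 T, v t 0 = 0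

/-- Boundary condition `(a v_x)(t,0) = 0` at `x = 0` (strong degeneracy case),
understood as a one-sided limit. -/
def BdryStrong (T : ℝ) (a : ℝ → ℝ) (v : ℝ → ℝ → ℝ) : Prop :=
  ∀ t ∈ Ioo 0 T, Tendsto (fun x => a x * pderivX v t x)
    (nhdsWithin 0 (Ioi 0)) (nhds 0)

end

/-! The mixed term equals `Θ' Θ λ² (a ψ'²) η² w²`, and `Θ' Θ ≤ T⁷ Θ³`, `η ≥ 1`, so it is at
most `T⁷ λ² (a ψ'²) σ³ w²`. It remains to bound the weight `a ψ'²` on three strips of `(0,1)`: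
on `(0, α')` it is `x² / a`, because `ψ' = x / a` there (the integral defining `ψ` converges at
`0` since `a x / x ^ K` is nonincreasing and `K < 2`); on `ω'` it is bounded by compactness; on
`(β', 1)`, where `ψ' = -x / a`, it is `x² / a ≤ (a 1 / β'²) a² ψ'⁴`. -/

lemma abs_le_psiSup {ψ : ℝ → ℝ} (hψ : ContinuousOn ψ (Icc 0 1)) {x : ℝ}
    (hx : x ∈ Icc (0:ℝ) 1) : |ψ x| ≤ psiSup ψ := by
  obtain ⟨M, hM⟩ := (isCompact_Icc.image_of_continuousOn hψ.abs).bddAbove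
  exact le_ciSup ⟨M, by rintro _ ⟨y, rfl⟩; exact hM ⟨y.1, y.2, rfl⟩⟩ (⟨x, hx⟩ : Icc (0:ℝ) 1)

lemma one_le_etaFun {ψ : ℝ → ℝ} (hψ : ContinuousOn ψ (Icc 0 1)) {lam x : ℝ} (hlam : 0 ≤ lam)
    (hx : x ∈ Icc (0:ℝ) 1) : 1 ≤ etaFun ψ lam x :=
  one_le_exp (mul_nonneg hlam (by linarith [neg_abs_le (ψ x), abs_le_psiSup hψ hx]))

lemma thetaFun_nonneg (T t : ℝ) : 0 ≤ thetaFun T t := by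
  unfold thetaFun; positivity

lemma sigmaFun_nonneg (T : ℝ) (ψ : ℝ → ℝ) (lam t x : ℝ) : 0 ≤ sigmaFun T ψ lam t x :=
  mul_nonneg (thetaFun_nonneg T t) (exp_nonneg _)

lemma hasDerivAt_thetaFun {T t : ℝ} (ht : t * (T - t) ≠ 0) :
    HasDerivAt (thetaFun T) (-4 * (T - 2 * t) / (t * (T - t)) ^ 5) t := by
  have hu : HasDerivAt (fun τ : ℝ => τ * (T - τ)) (T - 2 * t) t :=
    ((hasDerivAt_id' t).mul ((hasDerivAt_const t T).sub (hasDerivAt_id' t))).congr_deriv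
      (by simp only [Pi.sub_apply]; ring)
  have hΘ : thetaFun T = fun τ => ((τ * (T - τ)) ^ 4)⁻¹ := by
    funext τ; simp [thetaFun]
  rw [hΘ]
  exact ((hu.pow 4).inv (pow_ne_zero 4 ht)).congr_deriv <| by
    show -((4 : ℕ) * (t * (T - t)) ^ (4 - 1) * (T - 2 * t)) / ((t * (T - t)) ^ 4) ^ 2 = _
    rw [div_eq_div_iff (pow_ne_zero 2 (pow_ne_zero 4 ht)) (pow_ne_zero 5 ht)]
    push_cast
    ring

lemma deriv_thetaFun_mul_le {T t : ℝ} (ht : t ∈ Ioo 0 T) :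
    deriv (thetaFun T) t * thetaFun T t ≤ T ^ 7 * thetaFun T t ^ 3 := by
  have hu : 0 < t * (T - t) := mul_pos ht.1 (sub_pos.2 ht.2)
  have hT : 0 < T := ht.1.trans ht.2
  have hcube : (t * (T - t)) ^ 3 ≤ (T ^ 2 / 4) ^ 3 :=
    pow_le_pow_left₀ hu.le (by nlinarith [sq_nonneg (T - 2 * t)]) 3
  have heq : deriv (thetaFun T) t * thetaFun T t =
      4 * (2 * t - T) * (t * (T - t)) ^ 3 * thetaFun T t ^ 3 := by
    rw [(hasDerivAt_thetaFun hu.ne').deriv]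
    simp only [thetaFun]
    field_simp
    ring
  rw [heq]
  refine mul_le_mul_of_nonneg_right ?_ (pow_nonneg (thetaFun_nonneg T t) 3)
  -- `t (T - t) ≤ T² / 4` and `|2t - T| ≤ T`
  nlinarith [mul_le_mul_of_nonneg_right hcube hT.le, pow_pos hT 7,
    mul_le_mul_of_nonneg_left (show 2 * t - T ≤ T by linarith [ht.2]) (pow_pos hu 3).le]

lemma hasDerivAt_etaFun (ψ : ℝ → ℝ) (lam : ℝ) {x d : ℝ} (hd : HasDerivAt ψ d x) :
    HasDerivAt (etaFun ψ lam) (lam * d * etaFun ψ lam x) x :=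
  (((hasDerivAt_const x (psiSup ψ)).add hd).const_mul lam).exp.congr_deriv
    (by simp only [etaFun, Pi.add_apply]; ring)

lemma pderivX_phiFun (T : ℝ) (ψ : ℝ → ℝ) (lam t : ℝ) {x d : ℝ} (hd : HasDerivAt ψ d x) :
    pderivX (phiFun T ψ lam) t x = thetaFun T t * (lam * d * etaFun ψ lam x) :=
  (((hasDerivAt_etaFun ψ lam hd).sub_const _).const_mul _).deriv

lemma pderivX_pderivT_phiFun (T : ℝ) (ψ : ℝ → ℝ) (lam : ℝ) {t x d : ℝ}
    (ht : t * (T - t) ≠ 0) (hd : HasDerivAt ψ d x) :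
    pderivX (pderivT (phiFun T ψ lam)) t x =
      deriv (thetaFun T) t * (lam * d * etaFun ψ lam x) := by
  have hT : ∀ y, pderivT (phiFun T ψ lam) t y =
      deriv (thetaFun T) t * (etaFun ψ lam y - exp (3 * (lam * psiSup ψ))) := fun y =>
    ((hasDerivAt_thetaFun ht).differentiableAt.hasDerivAt.mul_const _).deriv
  simp only [pderivX, hT]
  exact (((hasDerivAt_etaFun ψ lam hd).sub_const _).const_mul _).deriv

lemma pderivX_pderivT_phiFun_mul_le {T : ℝ} {ψ : ℝ → ℝ} {lam s : ℝ} {v : ℝ → ℝ → ℝ} {t x A : ℝ}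
    (ht : t ∈ Ioo 0 T) (hψ : DifferentiableAt ℝ ψ x) (hη : 1 ≤ etaFun ψ lam x) (hA : 0 ≤ A) :
    pderivX (pderivT (phiFun T ψ lam)) t x * A * pderivX (phiFun T ψ lam) t x *
        wFun T ψ lam s v t x ^ 2 ≤
      T ^ 7 * lam ^ 2 * (A * deriv ψ x ^ 2) * sigmaFun T ψ lam t x ^ 3 *
        wFun T ψ lam s v t x ^ 2 := by
  have hu : t * (T - t) ≠ 0 := (mul_pos ht.1 (sub_pos.2 ht.2)).ne'
  rw [pderivX_pderivT_phiFun T ψ lam hu hψ.hasDerivAt, pderivX_phiFun T ψ lam t hψ.hasDerivAt]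
  set η := etaFun ψ lam x
  set P := lam ^ 2 * deriv ψ x ^ 2 * A * wFun T ψ lam s v t x ^ 2
  have hP : 0 ≤ P := by positivity
  calc _ = (deriv (thetaFun T) t * thetaFun T t) * (η ^ 2 * P) := by ring
    _ ≤ (T ^ 7 * thetaFun T t ^ 3) * (η ^ 3 * P) :=
        mul_le_mul (deriv_thetaFun_mul_le ht)
          (mul_le_mul_of_nonneg_right (pow_le_pow_right₀ hη (by norm_num)) hP)
          (by positivity) (mul_nonneg (pow_nonneg (ht.1.trans ht.2).le 7)
            (pow_nonneg (thetaFun_nonneg T t) 3))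
    _ = _ := by simp only [sigmaFun, η, P]; ring

lemma antitoneOn_div_rpow {a a' : ℝ → ℝ} {K b : ℝ}
    (hd : ∀ x ∈ Ioc (0:ℝ) b, HasDerivAt a (a' x) x)
    (hK : ∀ x ∈ Ioc (0:ℝ) b, x * a' x ≤ K * a x) :
    AntitoneOn (fun x => a x / x ^ K) (Ioc 0 b) := by
  have hderiv : ∀ x ∈ Ioc (0:ℝ) b, HasDerivAt (fun x => a x / x ^ K)
      ((a' x * x ^ K - a x * (K * x ^ (K - 1))) / (x ^ K) ^ 2) x := fun x hx =>
    (hd x hx).div (hasDerivAt_rpow_const (Or.inl hx.1.ne')) (rpow_pos_of_pos hx.1 K).ne'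
  refine antitoneOn_of_hasDerivWithinAt_nonpos (convex_Ioc 0 b)
    (fun x hx => (hderiv x hx).continuousAt.continuousWithinAt)
    (fun x hx => by
      rw [interior_Ioc] at hx
      exact (hderiv x (Ioo_subset_Ioc_self hx)).hasDerivWithinAt)
    (fun x hx => ?_)
  rw [interior_Ioc] at hx
  have hx0 := hx.1
  have hfac : a' x * x ^ K - a x * (K * x ^ (K - 1)) = x ^ (K - 1) * (x * a' x - K * a x) := by
    rw [rpow_sub_one hx0.ne']
    field_simp
  rw [hfac]
  exact div_nonpos_of_nonpos_of_nonneg (mul_nonpos_of_nonneg_of_nonpos (rpow_nonneg hx0.le _)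
    (sub_nonpos.2 (hK x (Ioo_subset_Ioc_self hx)))) (sq_nonneg _)

lemma continuousOn_id_div {a a' : ℝ → ℝ} (ha : DegenCoeff a a') :
    ContinuousOn (fun y => y / a y) (Ioc 0 1) :=
  continuousOn_id.div (ha.cont.mono Ioc_subset_Icc_self) fun y hy => (ha.pos y hy).ne'

-- `a y ≥ (a x / x^K) y^K` on `(0, x]`, so `y / a y = O(y^(1-K))` with `1 - K > -1`
lemma intervalIntegrable_id_div {a a' : ℝ → ℝ} {K x : ℝ} (ha : DegenCoeff a a')
    (hK : ∀ y ∈ Ioc (0:ℝ) 1, y * a' y ≤ K * a y) (hK2 : K < 2) (hx : x ∈ Ioc (0:ℝ) 1) :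
    IntervalIntegrable (fun y => y / a y) volume 0 x := by
  have hanti := antitoneOn_div_rpow ha.hasDeriv hK
  set c := a x / x ^ K
  have hc : 0 < c := div_pos (ha.pos x hx) (rpow_pos_of_pos hx.1 K)
  refine ((intervalIntegral.intervalIntegrable_rpow' (r := 1 - K) (by linarith)).const_mul
    c⁻¹).mono_fun ?_ ?_
  · rw [uIoc_of_le hx.1.le]
    exact ((continuousOn_id_div ha).mono fun y hy => ⟨hy.1, hy.2.trans hx.2⟩).aestronglyMeasurable
      measurableSet_Ioc
  · rw [uIoc_of_le hx.1.le, EventuallyLE, ae_restrict_iff' measurableSet_Ioc]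
    refine ae_of_all _ fun y hy => ?_
    have hy1 : y ∈ Ioc (0:ℝ) 1 := ⟨hy.1, hy.2.trans hx.2⟩
    have hyK : 0 < y ^ K := rpow_pos_of_pos hy.1 K
    have hlow : c * y ^ K ≤ a y :=
      (le_div_iff₀ hyK).1 (hanti hy1 hx hy.2)
    rw [norm_of_nonneg (div_nonneg hy.1.le (ha.pos y hy1).le),
      norm_of_nonneg (mul_nonneg (inv_nonneg.2 hc.le) (rpow_nonneg hy.1.le _)), rpow_sub hy.1,
      rpow_one]
    calc y / a y ≤ y / (c * y ^ K) := div_le_div_of_nonneg_left hy.1.le (mul_pos hc hyK) hlow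
      _ = c⁻¹ * (y / y ^ K) := by field_simp

lemma hasDerivAt_integral_id_div {a a' : ℝ → ℝ} (ha : DegenCoeff a a') {c x : ℝ}
    (hint : IntervalIntegrable (fun y => y / a y) volume c x) (hx : x ∈ Ioo (0:ℝ) 1) :
    HasDerivAt (fun u => ∫ y in c..u, y / a y) (x / a x) x :=
  have hcont : ContinuousOn (fun y => y / a y) (Ioo 0 1) :=
    (continuousOn_id_div ha).mono Ioo_subset_Ioc_self
  intervalIntegral.integral_hasDerivAt_right hint
    (hcont.stronglyMeasurableAtFilter isOpen_Ioo x hx) (hcont.continuousAt (isOpen_Ioo.mem_nhds hx))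

lemma hasDerivAt_psi_of_lt {a a' ψ : ℝ → ℝ} {K l : ℝ} (ha : DegenCoeff a a')
    (hK : ∀ y ∈ Ioc (0:ℝ) 1, y * a' y ≤ K * a y) (hK2 : K < 2) (hl : l ≤ 1)
    (hψ : ∀ y ∈ Ico (0:ℝ) l, ψ y = ∫ z in (0:ℝ)..y, z / a z) {x : ℝ} (hx : x ∈ Ioo 0 l) :
    HasDerivAt ψ (x / a x) x := by
  refine (hasDerivAt_integral_id_div ha (intervalIntegrable_id_div ha hK hK2
    ⟨hx.1, hx.2.le.trans hl⟩) ⟨hx.1, hx.2.trans_le hl⟩).congr_of_eventuallyEq ?_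
  filter_upwards [Ioo_mem_nhds hx.1 hx.2] with y hy using hψ y ⟨hy.1.le, hy.2⟩

lemma hasDerivAt_psi_of_gt {a a' ψ : ℝ → ℝ} {r : ℝ} (ha : DegenCoeff a a') (hr : 0 < r)
    (hψ : ∀ y ∈ Icc r 1, ψ y = -∫ z in r..y, z / a z) {x : ℝ} (hx : x ∈ Ioo r 1) :
    HasDerivAt ψ (-(x / a x)) x := by
  have hint : IntervalIntegrable (fun y => y / a y) volume r x :=
    ((continuousOn_id_div ha).mono (uIcc_of_le hx.1.le ▸ fun y hy =>
      ⟨hr.trans_le hy.1, hy.2.trans hx.2.le⟩)).intervalIntegrable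
  refine (hasDerivAt_integral_id_div ha hint ⟨hr.trans hx.1, hx.2⟩).neg.congr_of_eventuallyEq ?_
  filter_upwards [Ioo_mem_nhds hx.1 hx.2] with y hy using hψ y ⟨hy.1.le, hy.2.le⟩

lemma mul_deriv_psi_sq_of_lt {a a' ψ : ℝ → ℝ} {K l : ℝ} (ha : DegenCoeff a a')
    (hK : ∀ y ∈ Ioc (0:ℝ) 1, y * a' y ≤ K * a y) (hK2 : K < 2) (hl : l ≤ 1)
    (hψ : ∀ y ∈ Ico (0:ℝ) l, ψ y = ∫ z in (0:ℝ)..y, z / a z) {x : ℝ} (hx : x ∈ Ioo 0 l) :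
    a x * deriv ψ x ^ 2 = x ^ 2 / a x := by
  have hax : a x ≠ 0 := (ha.pos x ⟨hx.1, hx.2.le.trans hl⟩).ne'
  rw [(hasDerivAt_psi_of_lt ha hK hK2 hl hψ hx).deriv]
  field_simp

lemma mul_deriv_psi_sq_le_of_gt {a a' ψ : ℝ → ℝ} {r : ℝ} (ha : DegenCoeff a a') (hr : 0 < r)
    (hψ : ∀ y ∈ Icc r 1, ψ y = -∫ z in r..y, z / a z) {x : ℝ} (hx : x ∈ Ioo r 1) :
    a x * deriv ψ x ^ 2 ≤ a 1 / r ^ 2 * (a x ^ 2 * |deriv ψ x| ^ 4) := by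
  have hx0 : 0 < x := hr.trans hx.1
  have hax : 0 < a x := ha.pos x ⟨hx0, hx.2.le⟩
  have ha1 : a x ≤ a 1 := ha.mono ⟨hx0.le, hx.2.le⟩ ⟨zero_le_one, le_rfl⟩ hx.2.le
  rw [(hasDerivAt_psi_of_gt ha hr hψ hx).deriv, abs_neg, abs_of_pos (div_pos hx0 hax)]
  have hlhs : a x * (-(x / a x)) ^ 2 = x ^ 2 / a x := by field_simp
  have hrhs : a 1 / r ^ 2 * (a x ^ 2 * (x / a x) ^ 4) =
      a 1 * x ^ 2 / (r ^ 2 * a x) * (x ^ 2 / a x) := by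
    field_simp
  rw [hlhs, hrhs]
  refine le_mul_of_one_le_left (by positivity) ((one_le_div (by positivity)).2 ?_)
  nlinarith [mul_le_mul ha1 (pow_le_pow_left₀ hr.le hx.1.le 2) (sq_nonneg r)
    (ha.pos 1 ⟨one_pos, le_rfl⟩).le]

lemma exists_mul_deriv_sq_le {a ψ : ℝ → ℝ} {l r : ℝ} (ha : ContinuousOn a (Icc l r))
    (hψ : ContDiffOn ℝ 2 ψ (Icc 0 1)) (hl : 0 < l) (hr : r < 1) :
    ∃ c ≥ 0, ∀ x ∈ Icc l r, a x * deriv ψ x ^ 2 ≤ c := by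
  have hd : ContinuousOn (deriv ψ) (Icc l r) :=
    ((hψ.mono Ioo_subset_Icc_self).continuousOn_deriv_of_isOpen isOpen_Ioo (by norm_num)).mono
      (Icc_subset_Ioo hl hr)
  obtain ⟨c, hc⟩ := isCompact_Icc.exists_bound_of_continuousOn (ha.mul (hd.pow 2))
  exact ⟨max c 0, le_max_right _ _, fun x hx =>
    (Real.le_norm_self _).trans ((hc x hx).trans (le_max_left _ _))⟩

lemma exists_mul_deriv_psi_sq_le {a a' ψ : ℝ → ℝ} {K α' β' : ℝ} (ha : DegenCoeff a a')
    (hK : ∀ x ∈ Ioc (0:ℝ) 1, x * a' x ≤ K * a x) (hK2 : K < 2) (hψ : WeightPsi a α' β' ψ)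
    (hα' : 0 < α') (hα'β' : α' < β') (hβ' : β' < 1) :
    ∃ M > 0, (∀ x ∈ Ioo 0 α', a x * deriv ψ x ^ 2 ≤ M * (x ^ 2 / a x)) ∧
      (∀ x ∈ Ioo α' β', a x * deriv ψ x ^ 2 ≤ M) ∧
      ∀ x ∈ Ioo β' 1, a x * deriv ψ x ^ 2 ≤ M * (a x ^ 2 * |deriv ψ x| ^ 4) := by
  obtain ⟨c, hc, hmid⟩ := exists_mul_deriv_sq_le (ha.cont.mono (Icc_subset_Icc hα'.le hβ'.le))
    hψ.smooth hα' hβ'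
  have hc' : 0 ≤ a 1 / β' ^ 2 := div_nonneg (ha.pos 1 ⟨one_pos, le_rfl⟩).le (sq_nonneg _)
  refine ⟨1 + c + a 1 / β' ^ 2, by positivity, fun x hx => ?_,
    fun x hx => (hmid x (Ioo_subset_Icc_self hx)).trans (by linarith), fun x hx => ?_⟩
  · have hax : 0 < a x := ha.pos x ⟨hx.1, hx.2.le.trans (hα'β'.trans hβ').le⟩
    rw [mul_deriv_psi_sq_of_lt ha hK hK2 (hα'β'.trans hβ').le hψ.left hx]
    exact le_mul_of_one_le_left (by positivity) (by linarith)
  · exact (mul_deriv_psi_sq_le_of_gt ha (hα'.trans hα'β') hψ.right hx).trans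
      (mul_le_mul_of_nonneg_right (by linarith) (by positivity))

lemma QSub_mono {T l r l' r' : ℝ} (hl : l ≤ l') (hr : r' ≤ r) : QSub T l' r' ⊆ QSub T l r :=
  prod_mono subset_rfl (Ioo_subset_Ioo hl hr)

lemma setIntegral_QSub_split {f : ℝ × ℝ → ℝ} {T l m r : ℝ} (hlm : l < m) (hmr : m < r)
    (hf : IntegrableOn f (QSub T l r)) :
    ∫ p in QSub T l r, f p = (∫ p in QSub T l m, f p) + ∫ p in QSub T m r, f p := by
  have hU : QSub T l r = QSub T l m ∪ Ioo 0 T ×ˢ Ico m r := by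
    rw [QSub, QSub, ← prod_union, Ioo_union_Ico_eq_Ioo hlm hmr.le]
  have hae : Ioo 0 T ×ˢ Ico m r =ᵐ[volume] QSub T m r := by
    rw [Measure.volume_eq_prod]
    exact Measure.set_prod_ae_eq (ae_eq_refl _) Ioo_ae_eq_Ico.symm
  have hdisj : Disjoint (QSub T l m) (Ioo 0 T ×ˢ Ico m r) :=
    Set.disjoint_left.2 fun p h1 h2 => (h1.2.2.trans_le h2.2.1).false
  rw [hU] at hf ⊢
  rw [setIntegral_union hdisj (measurableSet_Ioo.prod measurableSet_Ico)
    (hf.mono_set subset_union_left) (hf.mono_set subset_union_right), setIntegral_congr_set hae]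

lemma setIntegral_pderivX_pderivT_phiFun_mul_le {T lam s l r c : ℝ} {a ψ g : ℝ → ℝ} {v : ℝ → ℝ → ℝ}
    (hlam : 0 ≤ lam) (hψ : ContDiffOn ℝ 2 ψ (Icc 0 1)) (hl : 0 ≤ l) (hr : r ≤ 1)
    (ha : ∀ x ∈ Ioo (0:ℝ) 1, 0 ≤ a x) (hg : ∀ x ∈ Ioo l r, a x * deriv ψ x ^ 2 ≤ c * g x)
    (hF : IntegrableOn (fun p : ℝ × ℝ => pderivX (pderivT (phiFun T ψ lam)) p.1 p.2 * a p.2 *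
      pderivX (phiFun T ψ lam) p.1 p.2 * wFun T ψ lam s v p.1 p.2 ^ 2) (QSub T l r))
    (hG : IntegrableOn (fun p : ℝ × ℝ => g p.2 * sigmaFun T ψ lam p.1 p.2 ^ 3 *
      wFun T ψ lam s v p.1 p.2 ^ 2) (QSub T l r)) :
    ∫ p in QSub T l r, pderivX (pderivT (phiFun T ψ lam)) p.1 p.2 * a p.2 *
        pderivX (phiFun T ψ lam) p.1 p.2 * wFun T ψ lam s v p.1 p.2 ^ 2 ≤
      T ^ 7 * c * lam ^ 2 * ∫ p in QSub T l r, g p.2 * sigmaFun T ψ lam p.1 p.2 ^ 3 *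
        wFun T ψ lam s v p.1 p.2 ^ 2 := by
  rw [← integral_const_mul]
  refine setIntegral_mono_on hF (hG.const_mul _) (measurableSet_Ioo.prod measurableSet_Ioo)
    fun p hp => ?_
  have hx : p.2 ∈ Ioo (0:ℝ) 1 := ⟨hl.trans_lt hp.2.1, hp.2.2.trans_le hr⟩
  have hdiff : DifferentiableAt ℝ ψ p.2 :=
    (hψ.differentiableOn (by norm_num)).differentiableAt (Icc_mem_nhds hx.1 hx.2)
  have hT : 0 ≤ T ^ 7 := pow_nonneg (hp.1.1.trans hp.1.2).le 7
  calc _ ≤ T ^ 7 * lam ^ 2 * (a p.2 * deriv ψ p.2 ^ 2) * sigmaFun T ψ lam p.1 p.2 ^ 3 *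
        wFun T ψ lam s v p.1 p.2 ^ 2 :=
      pderivX_pderivT_phiFun_mul_le hp.1 hdiff
        (one_le_etaFun hψ.continuousOn hlam (Ioo_subset_Icc_self hx)) (ha p.2 hx)
    _ ≤ T ^ 7 * lam ^ 2 * (c * g p.2) * sigmaFun T ψ lam p.1 p.2 ^ 3 *
        wFun T ψ lam s v p.1 p.2 ^ 2 := by
      have := sigmaFun_nonneg T ψ lam p.1 p.2
      gcongr T ^ 7 * lam ^ 2 * ?_ * _ * _
      exact hg p.2 hp.2
    _ = _ := by ring

theorem lower_bound_mixed_time_space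
    (T αw βw α' β' K : ℝ)
    (hT : 0 < T) (hαw : 0 < αw) (hαα' : αw < α') (hα'β' : α' < β')
    (hβ'β : β' < βw) (hβw : βw < 1)
    (a a' ψ : ℝ → ℝ)
    (ha : DegenCoeff a a')
    (hK : DegenWeak a a' K ∨ DegenStrong a a' K)
    (hψ : WeightPsi a α' β' ψ) :
    ∃ C > (0:ℝ), ∀ lam ≥ (1:ℝ), ∀ s > (0:ℝ),
      ∀ h v : ℝ → ℝ → ℝ,
        IntegrableOn (fun p : ℝ × ℝ => h p.1 p.2 ^ 2) (QSub T 0 1) →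
        RegSol T a h v →
        (BdryWeak T v ∨ BdryStrong T a v) →
        IntegrableOn (fun p : ℝ × ℝ => (pderivX (pderivT (phiFun T ψ lam)) p.1 p.2) * a p.2 * (pderivX (phiFun T ψ lam) p.1 p.2) * (wFun T ψ lam s v p.1 p.2) ^ 2) (QSub T 0 1) →
        IntegrableOn (fun p : ℝ × ℝ => (p.2 ^ 2 / a p.2) * (sigmaFun T ψ lam p.1 p.2) ^ 3 * (wFun T ψ lam s v p.1 p.2) ^ 2) (QSub T 0 α') →
        IntegrableOn (fun p : ℝ × ℝ => (sigmaFun T ψ lam p.1 p.2) ^ 3 * (wFun T ψ lam s v p.1 p.2) ^ 2) (QSub T α' β') →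
        IntegrableOn (fun p : ℝ × ℝ => (a p.2) ^ 2 * |(deriv ψ p.2)| ^ 4 * (sigmaFun T ψ lam p.1 p.2) ^ 3 * (wFun T ψ lam s v p.1 p.2) ^ 2) (QSub T 0 1) →
        -(2 * s ^ 2) * (∫ p in QSub T 0 1, (pderivX (pderivT (phiFun T ψ lam)) p.1 p.2) * a p.2 * (pderivX (phiFun T ψ lam) p.1 p.2) * (wFun T ψ lam s v p.1 p.2) ^ 2) ≥
          -(C * s ^ 2 * lam ^ 2) * ((∫ p in QSub T 0 α', (p.2 ^ 2 / a p.2) * (sigmaFun T ψ lam p.1 p.2) ^ 3 * (wFun T ψ lam s v p.1 p.2) ^ 2)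
          + (∫ p in QSub T α' β', (sigmaFun T ψ lam p.1 p.2) ^ 3 * (wFun T ψ lam s v p.1 p.2) ^ 2)
          + (∫ p in QSub T 0 1, (a p.2) ^ 2 * |(deriv ψ p.2)| ^ 4 * (sigmaFun T ψ lam p.1 p.2) ^ 3 * (wFun T ψ lam s v p.1 p.2) ^ 2)) := by
  obtain ⟨hK2, hKb⟩ : K < 2 ∧ ∀ x ∈ Ioc (0:ℝ) 1, x * a' x ≤ K * a x := by
    rcases hK with ⟨-, hK1, hb⟩ | ⟨-, hK2, hb, -⟩
    exacts [⟨by linarith, hb⟩, ⟨hK2, hb⟩]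
  have hα' : 0 < α' := hαw.trans hαα'
  have hβ' : β' < 1 := hβ'β.trans hβw
  have hα'1 : α' ≤ 1 := (hα'β'.trans hβ').le
  have hβ'0 : 0 ≤ β' := (hα'.trans hα'β').le
  obtain ⟨M, hM, hleft, hmid, hright⟩ :=
    exists_mul_deriv_psi_sq_le ha hKb hK2 hψ hα' hα'β' hβ'
  refine ⟨2 * T ^ 7 * M, by positivity, fun lam hlam s _ _ v _ _ _ hF hI1 hI2 hI3 => ?_⟩
  have ha0 : ∀ x ∈ Ioo (0:ℝ) 1, 0 ≤ a x := fun x hx => (ha.pos x ⟨hx.1, hx.2.le⟩).le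
  have h1 := setIntegral_pderivX_pderivT_phiFun_mul_le (by linarith) hψ.smooth le_rfl hα'1 ha0
    hleft (hF.mono_set (QSub_mono le_rfl hα'1)) hI1
  have h2 := setIntegral_pderivX_pderivT_phiFun_mul_le (g := fun _ => 1) (by linarith) hψ.smooth
    hα'.le hβ'.le ha0 (by simpa using hmid) (hF.mono_set (QSub_mono hα'.le hβ'.le))
    (by simpa only [one_mul] using hI2)
  have h3 := setIntegral_pderivX_pderivT_phiFun_mul_le (by linarith) hψ.smooth hβ'0 le_rfl ha0
    hright (hF.mono_set (QSub_mono hβ'0 le_rfl)) (hI3.mono_set (QSub_mono hβ'0 le_rfl))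
  have h3' := setIntegral_mono_set hI3 (ae_of_all _ fun p => by
      have := sigmaFun_nonneg T ψ lam p.1 p.2; simp only [Pi.zero_apply]; positivity)
    (QSub_mono hβ'0 le_rfl).eventuallyLE
  simp only [one_mul] at h2
  rw [setIntegral_QSub_split hα' (hα'β'.trans hβ') hF,
    setIntegral_QSub_split hα'β' hβ' (hF.mono_set (QSub_mono hα'.le le_rfl))]
  have htotal := add_le_add h1 (add_le_add h2 (h3.trans
    (mul_le_mul_of_nonneg_left h3' (by positivity : 0 ≤ T ^ 7 * M * lam ^ 2))))
  rw [← mul_add, ← mul_add, ← add_assoc] at htotal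
  have := mul_le_mul_of_nonneg_left htotal (by positivity : 0 ≤ 2 * s ^ 2)
  linarith
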